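/- Fix η > 0. The function u ↦ β(u,η), where β(u,η) is the unique positive solution of e^{−uβ} = 1 − (u−η)β, is strictly decreasing in u (for u > η). For fixed u, β(u,η) is strictly increasing in η, and β(u,η) → 0 as η → 0+. -/

import Mathlib

/-!
Write `φ_u,η(x) = e^{-ux} - 1 + (u - η)x` (`betaResidual u η x`), so that `β(u, η)` is a positive
zero of the convex function `φ_u,η`, which also vanishes at `0`. By convexity `φ_u,η ≤ 0` on
`[0, β(u, η)]`, so any `x ≥ 0` with `φ_u,η(x) > 0` lies beyond `β(u, η)`. Since `φ` is strictly
increasing in `u` and strictly decreasing in `η` at every `x > 0`, this gives both monotonicity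
statements. For the limit, `φ_u,0(ε) > 0`, hence by continuity `φ_u,η(ε) > 0` for small `η`,
i.e. `β(u, η) < ε`.
-/

open Real Set Filter Topology

noncomputable def betaResidual (u η x : ℝ) : ℝ := exp (-(u * x)) - 1 + (u - η) * x

lemma betaResidual_eq_zero_iff {u η x : ℝ} :
    betaResidual u η x = 0 ↔ exp (-(u * x)) = 1 - (u - η) * x := by
  unfold betaResidual
  constructor <;> intro h <;> linarith

lemma convexOn_betaResidual (u η : ℝ) : ConvexOn ℝ univ (betaResidual u η) := by
  have hexp : ConvexOn ℝ univ fun x : ℝ => exp (-(u * x)) := by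
    simpa [Function.comp_def] using convexOn_exp.comp_linearMap (LinearMap.mul ℝ ℝ (-u))
  have hlin : ConvexOn ℝ univ fun x : ℝ => (u - η) * x - 1 :=
    ((LinearMap.mul ℝ ℝ (u - η)).convexOn convex_univ).add_const (-1)
  have hsum : betaResidual u η = (fun x => exp (-(u * x))) + fun x => (u - η) * x - 1 := by
    funext x; simp only [betaResidual, Pi.add_apply]; ring
  exact hsum ▸ hexp.add hlin

lemma betaResidual_zero (u η : ℝ) : betaResidual u η 0 = 0 := by simp [betaResidual]

lemma lt_of_betaResidual_pos {u η B x : ℝ} (hB : betaResidual u η B = 0) (hx : 0 ≤ x)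
    (hpos : 0 < betaResidual u η x) : B < x := by
  by_contra! hxB
  have hmem : x ∈ segment ℝ 0 B := by rw [segment_eq_Icc (hx.trans hxB)]; exact ⟨hx, hxB⟩
  have := (convexOn_betaResidual u η).le_max_of_mem_segment (mem_univ 0) (mem_univ B) hmem
  rw [hB, betaResidual_zero, max_self] at this
  exact this.not_gt hpos

lemma betaResidual_lt_betaResidual_of_lt_left {u₁ u₂ η x : ℝ} (hu₁ : 0 ≤ u₁) (hu : u₁ < u₂)
    (hx : 0 < x) : betaResidual u₁ η x < betaResidual u₂ η x := by
  have hexp_le_one : exp (-(u₁ * x)) ≤ 1 := exp_le_one_iff.2 (by nlinarith)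
  have hsplit : exp (-(u₂ * x)) = exp (-(u₁ * x)) * exp (-((u₂ - u₁) * x)) := by
    rw [← exp_add]; ring_nf
  have htangent : 1 - (u₂ - u₁) * x < exp (-((u₂ - u₁) * x)) := by
    linarith [add_one_lt_exp (neg_ne_zero.2 (mul_pos (sub_pos.2 hu) hx).ne')]
  unfold betaResidual
  nlinarith [exp_pos (-(u₁ * x)), mul_pos (sub_pos.2 hu) hx]

lemma betaResidual_lt_betaResidual_of_lt_right {u η₁ η₂ x : ℝ} (hη : η₁ < η₂) (hx : 0 < x) :
    betaResidual u η₂ x < betaResidual u η₁ x := by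
  unfold betaResidual; nlinarith

lemma betaResidual_zero_right_pos {u x : ℝ} (hu : 0 < u) (hx : 0 < x) :
    0 < betaResidual u 0 x := by
  unfold betaResidual
  linarith [add_one_lt_exp (neg_ne_zero.2 (mul_pos hu hx).ne')]

theorem stmt_10 (β : ℝ → ℝ → ℝ)
    (hβ : ∀ u η : ℝ, 0 < η → η < u →
      0 < β u η ∧ Real.exp (-(u * β u η)) = 1 - (u - η) * β u η) :
    (∀ η : ℝ, 0 < η → StrictAntiOn (fun u => β u η) (Set.Ioi η)) ∧
    (∀ u : ℝ, 0 < u → StrictMonoOn (fun η => β u η) (Set.Ioo 0 u)) ∧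
    (∀ u : ℝ, 0 < u →
      Filter.Tendsto (fun η => β u η) (nhdsWithin 0 (Set.Ioi 0)) (nhds 0)) := by
  have root : ∀ u η, 0 < η → η < u → betaResidual u η (β u η) = 0 := fun u η h₀ h₁ =>
    betaResidual_eq_zero_iff.2 (hβ u η h₀ h₁).2
  refine ⟨fun η hη u₁ hu₁ u₂ hu₂ hu => ?_, fun u _ η₁ hη₁ η₂ hη₂ hη => ?_, fun u hu => ?_⟩
  · refine lt_of_betaResidual_pos (root u₂ η hη hu₂) (hβ u₁ η hη hu₁).1.le ?_
    rw [← root u₁ η hη hu₁]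
    exact betaResidual_lt_betaResidual_of_lt_left (hη.trans hu₁).le hu (hβ u₁ η hη hu₁).1
  · refine lt_of_betaResidual_pos (root u η₁ hη₁.1 hη₁.2) (hβ u η₂ hη₂.1 hη₂.2).1.le ?_
    rw [← root u η₂ hη₂.1 hη₂.2]
    exact betaResidual_lt_betaResidual_of_lt_right hη (hβ u η₂ hη₂.1 hη₂.2).1
  · have hdom : ∀ᶠ η in 𝓝[>] 0, η ∈ Ioo 0 u := Ioo_mem_nhdsGT hu
    refine tendsto_order.2 ⟨fun a ha => hdom.mono fun η h => ha.trans (hβ u η h.1 h.2).1,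
      fun ε hε => ?_⟩
    have hcont : Continuous fun η => betaResidual u η ε := by unfold betaResidual; fun_prop
    have hres : ∀ᶠ η in 𝓝[>] 0, 0 < betaResidual u η ε :=
      ((hcont.tendsto 0).eventually_const_lt (betaResidual_zero_right_pos hu hε)).filter_mono
        nhdsWithin_le_nhds
    filter_upwards [hdom, hres] with η h hr
    exact lt_of_betaResidual_pos (root u η h.1 h.2) hε.le hr
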